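/- arXiv:1310.4755 — 3 statements merged into one kernel-verified Lean document; each statement's English description precedes it below -/
import Mathlib

section
/- Let μ = C + l_1 + l_2 be a curved symmetric DGLA structure on a ℤ-graded vector space E (a curved L∞-structure whose only components are a 0-form C ∈ E_1, a symmetric vector valued 1-form l_1 of degree +1, and a symmetric vector valued 2-form l_2 of degree +1), and let π ∈ E_0, viewed as a symmetric vector valued 0-form. Then π + S is a Nijenhuis vector valued form (with curvature) with respect to μ, with square 2π + S, if and only if π is a Poisson element, i.e. l_2(π,π) = 0. -/
open scoped DirectSum
open Classical

noncomputable section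

namespace RN

section Core

variable (𝕜 : Type) [Field 𝕜] [CharZero 𝕜]
variable (E : ℤ → Type) [∀ i, AddCommGroup (E i)] [∀ i, Module 𝕜 (E i)]

/-- Raw vector-valued forms on the graded vector space `E`: for every arity `n` and every
vector of (input) degrees `ι`, a function on homogeneous tuples with values in the total
graded space `⨁ i, E i`. -/
abbrev RawForm : Type :=
  ∀ n : ℕ, ∀ ι : Fin n → ℤ, (∀ j, E (ι j)) → ⨁ i, E i

/-- Multilinearity (in each slot, on homogeneous arguments). -/
def IsMultilin (F : RawForm E) : Prop :=
  ∀ (n : ℕ) (ι : Fin n → ℤ) (x : ∀ j, E (ι j)) (j : Fin n) (a b : E (ι j)) (c : 𝕜),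
    F n ι (Function.update x j (a + b)) =
        F n ι (Function.update x j a) + F n ι (Function.update x j b) ∧
      F n ι (Function.update x j (c • a)) = c • F n ι (Function.update x j a)

/-- Graded symmetry: swapping two adjacent homogeneous arguments multiplies the value
by the Koszul sign `(-1)^{|X||Y|}`. -/
def IsGradedSym (F : RawForm E) : Prop :=
  ∀ (n : ℕ) (ι : Fin n → ℤ) (x : ∀ j, E (ι j)) (p q : Fin n), (p : ℕ) + 1 = (q : ℕ) →
    F n (fun j => ι (Equiv.swap p q j)) (fun j => x (Equiv.swap p q j)) =
      ((-1 : 𝕜) ^ (ι p * ι q)) • F n ι x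

/-- `F` has degree `d`: its value on homogeneous arguments of degrees `ι` is homogeneous
of degree `(∑ j, ι j) + d`. -/
def IsOfDeg (d : ℤ) (F : RawForm E) : Prop :=
  ∀ (n : ℕ) (ι : Fin n → ℤ) (x : ∀ j, E (ι j)) (m : ℤ),
    m ≠ (∑ j, ι j) + d → F n ι x m = 0

/-- Symmetric vector valued form of degree `d`. -/
def IsSVF (d : ℤ) (F : RawForm E) : Prop :=
  IsMultilin 𝕜 E F ∧ IsGradedSym 𝕜 E F ∧ IsOfDeg E d F

/-- `F` is (concentrated in) a `k`-form. -/
def IsArity (k : ℕ) (F : RawForm E) : Prop :=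
  ∀ n, n ≠ k → ∀ (ι : Fin n → ℤ) (x : ∀ j, E (ι j)), F n ι x = 0

/-- `F` has no 0-form (curvature) component. -/
def NoCurv (F : RawForm E) : Prop :=
  ∀ (ι : Fin 0 → ℤ) (x : ∀ j, E (ι j)), F 0 ι x = 0

/-- `(k, n-k)`-shuffles of `Fin n`. -/
def IsShuffle (k : ℕ) {n : ℕ} (σ : Equiv.Perm (Fin n)) : Prop :=
  ∀ i j : Fin n, i < j → ((j : ℕ) < k ∨ k ≤ (i : ℕ)) → σ i < σ j

/-- The Koszul sign of the rearrangement `(X_{σ(1)},…,X_{σ(n)})` of homogeneous elements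
of degrees `ι`. -/
def koszulSign {n : ℕ} (ι : Fin n → ℤ) (σ : Equiv.Perm (Fin n)) : 𝕜 :=
  ∏ p ∈ Finset.univ.filter (fun p : Fin n × Fin n => p.1 < p.2 ∧ σ p.2 < σ p.1),
    (-1 : 𝕜) ^ (ι (σ p.1) * ι (σ p.2))

/-- Prepend a degree to a vector of degrees. -/
def dcons {n : ℕ} (m : ℤ) (rest : Fin n → ℤ) : Fin (n + 1) → ℤ :=
  fun j => if h : (j : ℕ) = 0 then m else rest ⟨(j : ℕ) - 1, by have := j.isLt; omega⟩

/-- Prepend a homogeneous element to a tuple of homogeneous elements. -/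
def dconsV {n : ℕ} {m : ℤ} {rest : Fin n → ℤ} (v : E m) (xs : ∀ i, E (rest i)) :
    ∀ j : Fin (n + 1), E (dcons m rest j) := fun j => by
  unfold dcons
  by_cases h : (j : ℕ) = 0
  · rw [dif_pos h]; exact v
  · rw [dif_neg h]; exact xs ⟨(j : ℕ) - 1, by have := j.isLt; omega⟩

/-- The insertion operator `ι_F G`, summing over shuffles with Koszul signs. -/
def ins (F G : RawForm E) : RawForm E :=
  fun n ι x =>
    ∑ k : Fin (n + 1),
      ∑ σ ∈ Finset.univ.filter (fun σ : Equiv.Perm (Fin n) => IsShuffle (k : ℕ) σ),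
        koszulSign 𝕜 ι σ •
          DFinsupp.sum
            (F (k : ℕ)
              (fun i => ι (σ ⟨(i : ℕ), by have h1 := i.isLt; have h2 := k.isLt; omega⟩))
              (fun i => x (σ ⟨(i : ℕ), by have h1 := i.isLt; have h2 := k.isLt; omega⟩)))
            (fun m v =>
              G (n - (k : ℕ) + 1)
                (dcons m
                  (fun i => ι (σ ⟨(k : ℕ) + (i : ℕ), by have h1 := i.isLt; have h2 := k.isLt; omega⟩)))
                (dconsV E v
                  (fun i => x (σ ⟨(k : ℕ) + (i : ℕ), by have h1 := i.isLt; have h2 := k.isLt; omega⟩))))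

/-- The Richardson–Nijenhuis bracket `[F,G]_RN = ι_F G - (-1)^{dK·dL} ι_G F` of forms
of degrees `dK` and `dL`. -/
def rnb (dK dL : ℤ) (F G : RawForm E) : RawForm E :=
  fun n ι x => ins 𝕜 E F G n ι x - ((-1 : 𝕜) ^ (dK * dL)) • ins 𝕜 E G F n ι x

/-- An element of the graded vector space, regarded as a vector valued 0-form. -/
def ofElem (v : ⨁ i, E i) : RawForm E := fun n _ _ => if n = 0 then v else 0

/-- The Euler map `S(X) = -|X|·X`, a vector valued 1-form of degree 0. -/
def euler : RawForm E :=
  fun n ι x =>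
    if h : n = 1 then
      (-(ι ⟨0, by omega⟩)) • DirectSum.of E (ι ⟨0, by omega⟩) (x ⟨0, by omega⟩)
    else 0

/-- The identity map of `E`, regarded as a vector valued 1-form of degree 0. -/
def idF : RawForm E :=
  fun n ι x =>
    if h : n = 1 then DirectSum.of E (ι ⟨0, by omega⟩) (x ⟨0, by omega⟩) else 0

/-- The arity-`k` component of a vector valued form. -/
def comp (F : RawForm E) (k : ℕ) : RawForm E :=
  fun n ι x => if n = k then F n ι x else 0

end Core

/-!
For `v ∈ E₀` and a symmetric form `G` of degree `d` with components of arity at most two,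
`[v + S, G]_RN = ι_v G + d • G`: inserting the Euler map into `G` multiplies `G(X₁,…,Xₙ)` by
`-(|X₁| + ⋯ + |Xₙ|)`, inserting `G` into it multiplies by `-(|X₁| + ⋯ + |Xₙ| + d)`, and these two
contributions differ by `d • G`. Applied twice to `μ`, this gives
`[π + S, [π + S, μ]] - [2π + S, μ] = ι_π ι_π μ = l₂(π, π)`, while `[π + S, 2π + S] = S(π) = 0`
because `π` has degree zero.
-/

variable {E : ℤ → Type}

section Cons

variable {n : ℕ} {m : ℤ} {rest : Fin n → ℤ}

theorem sum_dcons : ∑ j, dcons m rest j = m + ∑ i, rest i := by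
  rw [Fin.sum_univ_succ]
  rfl

theorem dconsV_update_zero (v : E m) (a : E (dcons m rest 0)) (xs : ∀ i, E (rest i)) :
    Function.update (dconsV E v xs) 0 a = dconsV E a xs := by
  funext j
  induction j using Fin.cases with
  | zero => exact Function.update_self _ _ _
  | succ i => exact Function.update_of_ne (Fin.succ_ne_zero i) _ _

theorem dconsV_update_succ (v : E m) (xs : ∀ i, E (rest i)) (j : Fin n) (a : E (rest j)) :
    Function.update (dconsV E v xs) j.succ a = dconsV E v (Function.update xs j a) := by
  funext k
  induction k using Fin.cases with
  | zero => exact Function.update_of_ne (Fin.succ_ne_zero j).symm _ _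
  | succ i =>
    rcases eq_or_ne i j with rfl | hij
    · exact (Function.update_self (f := dconsV E v xs) i.succ a).trans
        (Function.update_self i a xs).symm
    · exact (Function.update_of_ne ((Fin.succ_injective _).ne hij) _ _).trans
        (Function.update_of_ne hij _ _).symm

end Cons

variable {𝕜 : Type} [Field 𝕜] [∀ i, AddCommGroup (E i)] [∀ i, Module 𝕜 (E i)]

theorem rawForm_congr (G : RawForm E) {n : ℕ} {ι ι' : Fin n → ℤ} (h : ∀ j, ι j = ι' j)
    {x : ∀ j, E (ι j)} {x' : ∀ j, E (ι' j)} (hx : ∀ j, HEq (x j) (x' j)) :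
    G n ι x = G n ι' x' := by
  obtain rfl : ι = ι' := funext h
  obtain rfl : x = x' := funext fun j => eq_of_heq (hx j)
  rfl

theorem rawForm_congr_dcons (G : RawForm E) {n : ℕ} {m : ℤ} {rest rest' : Fin n → ℤ}
    (h : ∀ i, rest i = rest' i) (v : E m) {xs : ∀ i, E (rest i)} {xs' : ∀ i, E (rest' i)}
    (hx : ∀ i, HEq (xs i) (xs' i)) :
    G (n + 1) (dcons m rest) (dconsV E v xs) = G (n + 1) (dcons m rest') (dconsV E v xs') := by
  obtain rfl : rest = rest' := funext h
  obtain rfl : xs = xs' := funext fun i => eq_of_heq (hx i)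
  rfl

/-- The insertion `ι_v G` of the 0-form `v`. -/
def contract {m : ℤ} (v : E m) (G : RawForm E) : RawForm E :=
  fun n ι x => G (n + 1) (dcons m ι) (dconsV E v x)

variable (E) in
def IsArityLE (k : ℕ) (F : RawForm E) : Prop :=
  ∀ n, k < n → ∀ (ι : Fin n → ℤ) (x : ∀ j, E (ι j)), F n ι x = 0

section Forms

variable {k : ℕ} {d : ℤ} {F G : RawForm E}

theorem IsArity.isArityLE {l : ℕ} (hF : IsArity E k F) (hkl : k ≤ l) : IsArityLE E l F :=
  fun n hn => hF n (by omega)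

theorem IsArityLE.mono {l : ℕ} (hF : IsArityLE E k F) (hkl : k ≤ l) : IsArityLE E l F :=
  fun n hn => hF n (by omega)

theorem IsArityLE.add (hF : IsArityLE E k F) (hG : IsArityLE E k G) : IsArityLE E k (F + G) :=
  fun n hn ι x => by
    rw [Pi.add_apply, Pi.add_apply, Pi.add_apply, hF n hn ι x, hG n hn ι x, add_zero]

theorem IsArityLE.contract (hG : IsArityLE E (k + 1) G) {m : ℤ} (v : E m) :
    IsArityLE E k (contract v G) :=
  fun n hn _ _ => hG (n + 1) (by omega) _ _

theorem isArityLE_ofElem (k : ℕ) (w : ⨁ i, E i) : IsArityLE E k (ofElem E w) :=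
  fun _ hn _ _ => if_neg (by omega)

theorem isArityLE_euler : IsArityLE E 1 (euler E) :=
  fun _ hn _ _ => dif_neg (by omega)

theorem isGradedSym_of_isArityLE_one (hF : IsArityLE E 1 F) : IsGradedSym 𝕜 E F := by
  intro n ι x p q hpq
  have := q.isLt
  rw [hF n (by omega) ι x, hF n (by omega), smul_zero]

theorem IsSVF.add (hF : IsSVF 𝕜 E d F) (hG : IsSVF 𝕜 E d G) : IsSVF 𝕜 E d (F + G) := by
  obtain ⟨hFl, hFs, hFd⟩ := hF
  obtain ⟨hGl, hGs, hGd⟩ := hG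
  refine ⟨fun n ι x j a b c => ?_, fun n ι x p q hpq => ?_, fun n ι x m hm => ?_⟩
  · exact ⟨by simp only [Pi.add_apply, (hFl n ι x j a b c).1, (hGl n ι x j a b c).1]; abel,
      by simp only [Pi.add_apply, (hFl n ι x j a b c).2, (hGl n ι x j a b c).2, smul_add]⟩
  · simp only [Pi.add_apply, hFs n ι x p q hpq, hGs n ι x p q hpq, smul_add]
  · simp only [Pi.add_apply, DirectSum.add_apply, hFd n ι x m hm, hGd n ι x m hm, add_zero]

theorem isSVF_ofElem_of (d : ℤ) (v : E d) : IsSVF 𝕜 E d (ofElem E (DirectSum.of E d v)) := by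
  refine ⟨fun n ι x j a b c => ?_, isGradedSym_of_isArityLE_one (isArityLE_ofElem 1 _),
    fun n ι x m hm => ?_⟩
  · have hn : n ≠ 0 := (Fin.pos j).ne'
    simp only [ofElem, hn, if_false, add_zero, smul_zero, and_self]
  · unfold ofElem
    split_ifs with hn
    · subst hn
      exact DirectSum.of_eq_of_ne _ _ _ (by simpa using hm)
    · rfl

theorem isSVF_euler : IsSVF 𝕜 E 0 (euler E) := by
  refine ⟨fun n ι x j a b c => ?_, isGradedSym_of_isArityLE_one isArityLE_euler,
    fun n ι x m hm => ?_⟩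
  · unfold euler
    split_ifs with hn
    · subst hn
      obtain rfl : j = ⟨0, Nat.one_pos⟩ := Subsingleton.elim _ _
      simp only [Function.update_self, map_add, smul_add, DirectSum.of_smul, smul_comm c,
        and_self]
    · simp
  · unfold euler
    split_ifs with hn
    · subst hn
      rw [DFinsupp.smul_apply, DirectSum.of_eq_of_ne _ _ _ (by simpa using hm), smul_zero]
    · rfl

def IsMultilin.firstSlotLinearMap (hF : IsMultilin 𝕜 E F) (n : ℕ) (m : ℤ) (ι : Fin n → ℤ)
    (x : ∀ j, E (ι j)) : E m →ₗ[𝕜] ⨁ i, E i where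
  toFun a := F (n + 1) (dcons m ι) (dconsV E a x)
  map_add' a b := by
    have h := (hF (n + 1) (dcons m ι) (dconsV E a x) 0 a b 1).1
    erw [dconsV_update_zero, dconsV_update_zero, dconsV_update_zero] at h
    exact h
  map_smul' c a := by
    have h := (hF (n + 1) (dcons m ι) (dconsV E a x) 0 a a c).2
    erw [dconsV_update_zero, dconsV_update_zero] at h
    exact h

theorem contract_add {m : ℤ} (v : E m) : contract v (F + G) = contract v F + contract v G :=
  rfl

theorem contract_zsmul (hG : IsMultilin 𝕜 E G) (c : ℤ) {m : ℤ} (v : E m) :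
    contract (c • v) G = c • contract v G :=
  funext fun n => funext fun ι => funext fun x => map_zsmul (hG.firstSlotLinearMap n m ι x) c v

theorem IsSVF.contract (hG : IsSVF 𝕜 E d G) (hG2 : IsArityLE E 2 G) (v : E 0) :
    IsSVF 𝕜 E d (contract v G) := by
  refine ⟨fun n ι x j a b c => ?_, isGradedSym_of_isArityLE_one (hG2.contract v),
    fun n ι x m hm => hG.2.2 (n + 1) _ _ m (by rwa [sum_dcons, zero_add])⟩
  simp only [RN.contract, ← dconsV_update_succ]
  exact hG.1 (n + 1) (dcons 0 ι) (dconsV E v x) j.succ a b c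

theorem contract_ofElem {m : ℤ} (v : E m) (w : ⨁ i, E i) : contract v (ofElem E w) = 0 := by
  funext n ι x
  exact if_neg (Nat.succ_ne_zero n) (t := w)

theorem contract_euler (v : E 0) : contract v (euler E) = 0 := by
  funext n ι x
  cases n with
  | zero =>
    show (-(0 : ℤ)) • DirectSum.of E 0 v = 0
    rw [neg_zero, zero_smul]
  | succ n =>
    show euler E (n + 2) _ _ = 0
    exact dif_neg (by omega)

theorem contract_contract (hG : IsArityLE E 2 G) (v : E 0) :
    contract v (contract v G) = ofElem E (G 2 (fun _ => 0) (fun _ => v)) := by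
  funext n ι x
  cases n with
  | zero =>
    refine (rawForm_congr G (fun j => ?_) (fun j => ?_)).trans (if_pos rfl).symm <;>
      fin_cases j <;> rfl
  | succ n => exact (hG _ (by omega) _ _).trans (if_neg (Nat.succ_ne_zero n)).symm

theorem ofElem_eq_zero_iff (w : ⨁ i, E i) : ofElem E w = 0 ↔ w = 0 :=
  ⟨fun h => (if_pos rfl).symm.trans
      (congrFun (congrFun (congrFun h 0) (fun j => j.elim0)) (fun j => j.elim0)),
    fun h => funext fun n => funext fun _ => funext fun _ => by simp [ofElem, h]⟩

theorem zsmul_ofElem (c : ℤ) (w : ⨁ i, E i) : c • ofElem E w = ofElem E (c • w) := by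
  funext n ι x
  by_cases hn : n = 0 <;> simp [ofElem, hn]

end Forms

section Shuffles

theorem filter_isShuffle_eq_singleton_one {n k : ℕ} (hk : k = 0 ∨ n ≤ k) :
    Finset.univ.filter (fun σ : Equiv.Perm (Fin n) => IsShuffle k σ) = {1} := by
  ext σ
  simp only [Finset.mem_filter, Finset.mem_univ, true_and, Finset.mem_singleton]
  refine ⟨fun hσ => Equiv.ext (congrFun (StrictMono.eq_id fun i j hij => hσ i j hij ?_)), ?_⟩
  · rcases hk with rfl | hk
    · exact Or.inr (Nat.zero_le _)
    · exact Or.inl (j.isLt.trans_le hk)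
  · rintro rfl i j hij -
    exact hij

theorem filter_isShuffle_one_fin_two :
    Finset.univ.filter (fun σ : Equiv.Perm (Fin 2) => IsShuffle 1 σ) = {1, Equiv.swap 0 1} := by
  rw [Finset.filter_true_of_mem fun _ _ i j hij h => absurd h (by rw [Fin.lt_def] at hij; omega)]
  decide

theorem koszulSign_one {n : ℕ} (ι : Fin n → ℤ) : koszulSign 𝕜 ι 1 = 1 :=
  Finset.prod_eq_one fun _ hp => absurd (Finset.mem_filter.mp hp).2.1
    (not_lt.mpr (Finset.mem_filter.mp hp).2.2.le)

theorem koszulSign_swap_zero_one (ι : Fin 2 → ℤ) :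
    koszulSign 𝕜 ι (Equiv.swap 0 1) = (-1) ^ (ι 1 * ι 0) := by
  have : Finset.univ.filter
      (fun p : Fin 2 × Fin 2 => p.1 < p.2 ∧ Equiv.swap 0 1 p.2 < Equiv.swap 0 1 p.1) =
        {(0, 1)} := by
    decide
  rw [koszulSign, this, Finset.prod_singleton]
  rfl

end Shuffles

section Insertion

variable {d : ℤ} {F F' G G' : RawForm E}

theorem euler_one (ι : Fin 1 → ℤ) (x : ∀ j, E (ι j)) :
    euler E 1 ι x = DirectSum.of E (ι 0) ((-ι 0) • x 0) :=
  (map_zsmul _ _ _).symm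

theorem euler_dcons {k : ℕ} (hk : k = 0) (m : ℤ) (rest : Fin k → ℤ) (u : E m)
    (xs : ∀ i, E (rest i)) : euler E (k + 1) (dcons m rest) (dconsV E u xs) =
      (-m) • DirectSum.of E m u := by
  subst hk
  rfl

theorem sum_zsmul_of_homogeneous (f : ℤ → ℤ) {D : ℤ} {w : ⨁ i, E i} (hw : ∀ m, m ≠ D → w m = 0) :
    (w.sum fun m u => f m • DirectSum.of E m u) = f D • w := by
  have hwD : w = DirectSum.of E D (w D) := DFinsupp.ext fun m => by
    rcases eq_or_ne m D with rfl | hm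
    · exact (DirectSum.of_eq_same _ _).symm
    · rw [hw m hm, DirectSum.of_eq_of_ne _ _ _ hm]
  conv_lhs => rw [hwD]
  exact (DFinsupp.sum_single_index (by rw [map_zero, smul_zero])).trans (congrArg _ hwD.symm)

theorem ins_add_left (hG : IsMultilin 𝕜 E G) :
    ins 𝕜 E (F + F') G = ins 𝕜 E F G + ins 𝕜 E F' G := by
  funext n ι x
  simp only [ins, Pi.add_apply, ← Finset.sum_add_distrib, ← smul_add]
  refine Finset.sum_congr rfl fun k _ => Finset.sum_congr rfl fun σ _ => ?_
  congr 1
  exact DFinsupp.sum_add_index (fun m => map_zero (hG.firstSlotLinearMap _ m _ _))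
    (fun m => map_add (hG.firstSlotLinearMap _ m _ _))

theorem ins_add_right : ins 𝕜 E F (G + G') = ins 𝕜 E F G + ins 𝕜 E F G' := by
  funext n ι x
  simp only [ins, Pi.add_apply, DFinsupp.sum_add, smul_add, Finset.sum_add_distrib]

theorem ins_ofElem_right (w : ⨁ i, E i) : ins 𝕜 E G (ofElem E w) = 0 := by
  funext n ι x
  simp [ins, ofElem]

theorem ins_ofElem_of_left (hG : IsMultilin 𝕜 E G) {m : ℤ} (v : E m) :
    ins 𝕜 E (ofElem E (DirectSum.of E m v)) G = contract v G := by
  funext n ι x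
  rw [ins, Fintype.sum_eq_single ⟨0, n.succ_pos⟩ fun k hk => ?_]
  · rw [filter_isShuffle_eq_singleton_one (Or.inl rfl), Finset.sum_singleton, koszulSign_one,
      one_smul]
    refine (DFinsupp.sum_single_index (map_zero (hG.firstSlotLinearMap _ m _ _))).trans ?_
    exact rawForm_congr_dcons G (fun i => congrArg ι (Fin.ext (zero_add _))) v
      (fun i => congr_arg_heq x (Fin.ext (zero_add _)))
  · have hk0 : (k : ℕ) ≠ 0 := fun h => hk (Fin.ext h)
    simp [ofElem, hk0, DFinsupp.sum_zero_index]

theorem ins_euler_right (hG : IsOfDeg E d G) (n : ℕ) (ι : Fin n → ℤ) (x : ∀ j, E (ι j)) :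
    ins 𝕜 E G (euler E) n ι x = (-((∑ j, ι j) + d)) • G n ι x := by
  rw [ins, Fintype.sum_eq_single (Fin.last n) fun k hk => ?_]
  · rw [filter_isShuffle_eq_singleton_one (k := Fin.last n) (Or.inr (Fin.val_last n).ge),
      Finset.sum_singleton, koszulSign_one, one_smul]
    simp only [euler_dcons (k := n - (Fin.last n : ℕ)) (by simp)]
    exact sum_zsmul_of_homogeneous (fun m => -m) (hG n ι x)
  · have hkn : (k : ℕ) < n := lt_of_le_of_ne (Nat.lt_succ_iff.mp k.isLt) fun h => hk (Fin.ext h)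
    simp [euler, show n - (k : ℕ) ≠ 0 by omega]

theorem ins_euler_left_succ (hG : IsMultilin 𝕜 E G) (n : ℕ) (ι : Fin (n + 1) → ℤ)
    (x : ∀ j, E (ι j)) :
    ins 𝕜 E (euler E) G (n + 1) ι x =
      ∑ σ ∈ Finset.univ.filter (fun σ : Equiv.Perm (Fin (n + 1)) => IsShuffle 1 σ),
        koszulSign 𝕜 ι σ • (-ι (σ 0)) • G (n + 1) (fun j => ι (σ j)) (fun j => x (σ j)) := by
  rw [ins, Fintype.sum_eq_single ⟨1, by omega⟩ fun k hk => ?_]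
  · refine Finset.sum_congr rfl fun σ _ => congrArg _ ?_
    erw [euler_one]
    refine (DFinsupp.sum_single_index (map_zero (hG.firstSlotLinearMap _ _ _ _))).trans ?_
    refine (map_zsmul (hG.firstSlotLinearMap _ _ _ _) _ _).trans (congrArg _ ?_)
    refine rawForm_congr G (fun j => ?_) (fun j => ?_)
    · induction j using Fin.cases with
      | zero => rfl
      | succ i =>
        exact congrArg ι (congrArg σ (Fin.ext (show 1 + ((i : ℕ) + 1 - 1) = i + 1 by omega)))
    · induction j using Fin.cases with
      | zero => rfl
      | succ i =>
        exact congr_arg_heq (fun j => x (σ j))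
          (Fin.ext (show 1 + ((i : ℕ) + 1 - 1) = i + 1 by omega))
  · have hk1 : (k : ℕ) ≠ 1 := fun h => hk (Fin.ext h)
    simp [euler, hk1, DFinsupp.sum_zero_index]

theorem ins_euler_left (hG : IsSVF 𝕜 E d G) (hG2 : IsArityLE E 2 G) (n : ℕ) (ι : Fin n → ℤ)
    (x : ∀ j, E (ι j)) : ins 𝕜 E (euler E) G n ι x = (-(∑ j, ι j)) • G n ι x := by
  match n, ι, x with
  | 0, ι, x => simp [ins, euler, DFinsupp.sum_zero_index]
  | 1, ι, x =>
    rw [ins_euler_left_succ hG.1, filter_isShuffle_eq_singleton_one (Or.inr le_rfl),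
      Finset.sum_singleton, koszulSign_one, one_smul, Fin.sum_univ_one]
    rfl
  | 2, ι, x =>
    rw [ins_euler_left_succ hG.1, filter_isShuffle_one_fin_two, Finset.sum_pair (by decide),
      koszulSign_one, one_smul, koszulSign_swap_zero_one, hG.2.1 2 ι x 0 1 rfl, Fin.sum_univ_two]
    have hsign : (-1 : 𝕜) ^ (ι 1 * ι 0) * (-1) ^ (ι 0 * ι 1) = 1 := by
      rw [mul_comm (ι 1), ← mul_zpow, neg_one_mul, neg_neg, one_zpow]
    change (-ι 0) • G 2 ι x + _ = _
    rw [Equiv.swap_apply_left, smul_comm _ (-ι 1), smul_smul, hsign, one_smul, neg_add, add_smul]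
  | n + 3, ι, x =>
    rw [ins_euler_left_succ hG.1, hG2 (n + 3) (by omega), smul_zero]
    exact Finset.sum_eq_zero fun σ _ => by rw [hG2 (n + 3) (by omega), smul_zero, smul_zero]

end Insertion

theorem rnb_ofElem_add_euler {d : ℤ} (d' : ℤ) {G : RawForm E} (hG : IsSVF 𝕜 E d G)
    (hG2 : IsArityLE E 2 G) (v : E 0) :
    rnb 𝕜 E 0 d' (ofElem E (DirectSum.of E 0 v) + euler E) G = contract v G + d • G := by
  funext n ι x
  simp only [rnb, zero_mul, zpow_zero, one_smul, ins_add_left hG.1, ins_add_right,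
    ins_ofElem_of_left hG.1, ins_ofElem_right, Pi.add_apply, Pi.zero_apply, Pi.smul_apply,
    ins_euler_left hG hG2, ins_euler_right hG.2.2, zero_add, add_sub_assoc, ← sub_smul]
  congr 2
  ring

theorem statement13_general (𝕜 : Type) [Field 𝕜]
    (E : ℤ → Type) [∀ i, AddCommGroup (E i)] [∀ i, Module 𝕜 (E i)]
    (C : E 1) (l1 l2 : RawForm E)
    (h1 : IsSVF 𝕜 E 1 l1) (h1a : IsArity E 1 l1)
    (h2 : IsSVF 𝕜 E 1 l2) (h2a : IsArity E 2 l2)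
    (μ : RawForm E) (hμ : μ = ofElem E (DirectSum.of E 1 C) + l1 + l2)
    (π : E 0) :
    (rnb 𝕜 E 0 1 (ofElem E (DirectSum.of E 0 π) + euler E)
          (rnb 𝕜 E 0 1 (ofElem E (DirectSum.of E 0 π) + euler E) μ) =
        rnb 𝕜 E 0 1 ((2 : ℤ) • ofElem E (DirectSum.of E 0 π) + euler E) μ ∧
      rnb 𝕜 E 0 0 (ofElem E (DirectSum.of E 0 π) + euler E)
        ((2 : ℤ) • ofElem E (DirectSum.of E 0 π) + euler E) = 0) ↔
      l2 2 (fun _ => (0 : ℤ)) (fun _ => π) = 0 := by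
  have hμsvf : IsSVF 𝕜 E 1 μ := hμ ▸ ((isSVF_ofElem_of 1 C).add h1).add h2
  have hμ2 : IsArityLE E 2 μ :=
    hμ ▸ ((isArityLE_ofElem 2 _).add (h1a.isArityLE (by norm_num))).add (h2a.isArityLE le_rfl)
  have hμl2 : μ 2 (fun _ => 0) (fun _ => π) = l2 2 (fun _ => 0) (fun _ => π) := by
    subst hμ
    simp [ofElem, h1a 2 (by norm_num)]
  have hsquare : (2 : ℤ) • ofElem E (DirectSum.of E 0 π) + euler E =
      ofElem E (DirectSum.of E 0 ((2 : ℤ) • π)) + euler E := by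
    rw [zsmul_ofElem, map_zsmul]
  have hB : rnb 𝕜 E 0 1 (ofElem E (DirectSum.of E 0 π) + euler E) μ = contract π μ + μ := by
    rw [rnb_ofElem_add_euler 1 hμsvf hμ2, one_smul]
  have hBsvf : IsSVF 𝕜 E 1 (contract π μ + μ) := (hμsvf.contract hμ2 π).add hμsvf
  have hB2 : IsArityLE E 2 (contract π μ + μ) := ((hμ2.contract π).mono (by norm_num)).add hμ2
  rw [hB, rnb_ofElem_add_euler 1 hBsvf hB2, hsquare, rnb_ofElem_add_euler 1 hμsvf hμ2,
    rnb_ofElem_add_euler 0 (isSVF_ofElem_of 0 _ |>.add isSVF_euler)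
      ((isArityLE_ofElem 2 _).add (isArityLE_euler.mono (by norm_num))),
    contract_zsmul hμsvf.1]
  simp only [contract_add, contract_contract hμ2, contract_ofElem, contract_euler, zero_smul,
    add_zero, one_smul, hμl2, and_true]
  rw [show ∀ w c : RawForm E, w + c + (c + μ) = w + ((2 : ℤ) • c + μ) by intros; abel,
    add_eq_right, ofElem_eq_zero_iff]

/-- Let `μ = C + l₁ + l₂` be a curved symmetric DGLA structure on `E`
(a curved `L∞`-structure whose only components are a 0-form `C ∈ E₁`, a symmetric vector
valued 1-form `l₁` of degree `+1` and a symmetric vector valued 2-form `l₂` of degree `+1`),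
and `π ∈ E₀`.  Then `π + S` is a Nijenhuis vector valued form (with curvature) with respect
to `μ`, with square `2π + S`, iff `π` is a Poisson element, i.e. `l₂(π,π) = 0`. -/
theorem statement13 (𝕜 : Type) [Field 𝕜] [CharZero 𝕜]
    (E : ℤ → Type) [∀ i, AddCommGroup (E i)] [∀ i, Module 𝕜 (E i)]
    (C : E 1) (l1 l2 : RawForm E)
    (h1 : IsSVF 𝕜 E 1 l1) (h1a : IsArity E 1 l1)
    (h2 : IsSVF 𝕜 E 1 l2) (h2a : IsArity E 2 l2)
    (μ : RawForm E) (hμ : μ = ofElem E (DirectSum.of E 1 C) + l1 + l2)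
    (hμμ : rnb 𝕜 E 1 1 μ μ = 0) (π : E 0) :
    (rnb 𝕜 E 0 1 (ofElem E (DirectSum.of E 0 π) + euler E)
          (rnb 𝕜 E 0 1 (ofElem E (DirectSum.of E 0 π) + euler E) μ) =
        rnb 𝕜 E 0 1 ((2 : ℤ) • ofElem E (DirectSum.of E 0 π) + euler E) μ ∧
      rnb 𝕜 E 0 0 (ofElem E (DirectSum.of E 0 π) + euler E)
        ((2 : ℤ) • ofElem E (DirectSum.of E 0 π) + euler E) = 0) ↔
      l2 2 (fun _ => (0 : ℤ)) (fun _ => π) = 0 :=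
  statement13_general 𝕜 E C l1 l2 h1 h1a h2 h2a μ hμ π

end RN
end
end

section
/- Let (E, l_1, l_2) be a symmetric DGLA and π ∈ E_0 a Poisson element, i.e. l_2(π,π) = 0. Then the deformed structure [π + S, l_1 + l_2]_RN = l_1(π) + (l_1 + l_2(π,·)) + l_2 is a curved symmetric DGLA structure on E with curvature C' = l_1(π), differential d' = l_1 + l_2(π,·), and bracket l_2; explicitly: (a) l_2 is a graded symmetric Lie bracket of degree 1; (b) (l_1 + l_2(π,·))(l_1(π)) = 0; (c) l_2(l_1(π),X) + (l_1 + l_2(π,·))²(X) = 0 for all X ∈ E; (d) l_1 l_2(X,Y) + l_2(π,l_2(X,Y)) + l_2(l_1(X) + l_2(π,X),Y) + (−1)^{|X|} l_2(X, l_1(Y) + l_2(π,Y)) = 0 for all homogeneous X, Y ∈ E. -/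
/-!
Adding `π` shifts the differential to `d' = l₁ + l₂(π,·)`. Since `π` has degree `0`, graded
symmetry makes `l₂(π,·) = l₂(·,π)`, and the Jacobi identity for `(π,π,X)` together with the
compatibility identity for `(π,π)` read `2 l₂(l₂(π,X),π) = 0` and `2 l₂(π,l₁π) = 0`; in
characteristic zero this gives `l₂(π,l₂(π,X)) = 0` and `l₂(π,l₁π) = 0`. Together with
`l₁² = 0` this yields (b), and reduces (c) to the compatibility identity for `(π,X)`; (d) is
the compatibility identity for `(X,Y)` plus the Jacobi identity for `(π,X,Y)`, once
`l₂(π,Y)` is known to be homogeneous of degree `|Y| + 1`.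
-/

open scoped DirectSum
open DirectSum

namespace RN

section GradedBracket

variable {𝕜 : Type*} [Field 𝕜] {E : ℤ → Type*} [∀ i, AddCommGroup (E i)] [∀ i, Module 𝕜 (E i)]

def HasDegreeOne (B : (⨁ i, E i) →ₗ[𝕜] (⨁ i, E i) →ₗ[𝕜] ⨁ i, E i) : Prop :=
  ∀ (i j : ℤ) (v : E i) (w : E j) (m : ℤ), m ≠ i + j + 1 → B (of E i v) (of E j w) m = 0

def IsGradedSymm (B : (⨁ i, E i) →ₗ[𝕜] (⨁ i, E i) →ₗ[𝕜] ⨁ i, E i) : Prop :=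
  ∀ (i j : ℤ) (v : E i) (w : E j),
    B (of E i v) (of E j w) = ((-1 : 𝕜) ^ (i * j)) • B (of E j w) (of E i v)

def IsGradedJacobi (B : (⨁ i, E i) →ₗ[𝕜] (⨁ i, E i) →ₗ[𝕜] ⨁ i, E i) : Prop :=
  ∀ (i j k : ℤ) (v : E i) (w : E j) (z : E k),
    B (B (of E i v) (of E j w)) (of E k z) +
        ((-1 : 𝕜) ^ (j * k)) • B (B (of E i v) (of E k z)) (of E j w) +
        ((-1 : 𝕜) ^ (i * (j + k))) • B (B (of E j w) (of E k z)) (of E i v) = 0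

def IsDerivation (D : (⨁ i, E i) →ₗ[𝕜] ⨁ i, E i)
    (B : (⨁ i, E i) →ₗ[𝕜] (⨁ i, E i) →ₗ[𝕜] ⨁ i, E i) : Prop :=
  ∀ (i j : ℤ) (v : E i) (w : E j),
    D (B (of E i v) (of E j w)) + B (D (of E i v)) (of E j w) +
      ((-1 : 𝕜) ^ i) • B (of E i v) (D (of E j w)) = 0

omit [∀ i, Module 𝕜 (E i)] in
theorem eq_of_of_apply_eq_zero {x : ⨁ i, E i} {k : ℤ} (hx : ∀ m, m ≠ k → x m = 0) :
    x = of E k (x k) := by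
  ext m
  by_cases hm : m = k
  · subst hm
    rw [of_eq_same]
  · rw [of_eq_of_ne _ _ _ hm, hx m hm]

theorem eq_zero_of_add_self_eq_zero [CharZero 𝕜] {M : Type*} [AddCommGroup M] [Module 𝕜 M]
    {t : M} (h : t + t = 0) : t = 0 := by
  rw [← two_smul 𝕜 t] at h
  exact (smul_eq_zero.1 h).resolve_left two_ne_zero

theorem neg_one_zpow_mul_mul_neg_one_zpow (i j : ℤ) :
    (-1 : 𝕜) ^ (i * j) * (-1 : 𝕜) ^ ((j + 1) * i) = (-1 : 𝕜) ^ i := by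
  rw [← zpow_add₀ (by norm_num), show i * j + (j + 1) * i = 2 * (i * j) + i by ring,
    zpow_add₀ (by norm_num), (even_two_mul _).neg_one_zpow, one_mul]

variable {D : (⨁ i, E i) →ₗ[𝕜] ⨁ i, E i} {B : (⨁ i, E i) →ₗ[𝕜] (⨁ i, E i) →ₗ[𝕜] ⨁ i, E i}

theorem HasDegreeOne.eq_of (hB : HasDegreeOne B) {i j : ℤ} (v : E i) (w : E j) :
    B (of E i v) (of E j w) = of E (i + j + 1) (B (of E i v) (of E j w) (i + j + 1)) :=
  eq_of_of_apply_eq_zero (hB i j v w)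

theorem IsGradedSymm.apply_of_zero_comm (hB : IsGradedSymm B) (p : E 0) (X : ⨁ i, E i) :
    B (of E 0 p) X = B X (of E 0 p) := by
  suffices B (of E 0 p) = B.flip (of E 0 p) from LinearMap.congr_fun this X
  refine linearMap_ext 𝕜 fun j => LinearMap.ext fun w => ?_
  simpa [lof_eq_of] using hB 0 j p w

theorem IsDerivation.apply_of_zero_left (hD : IsDerivation D B) (p : E 0) (X : ⨁ i, E i) :
    D (B (of E 0 p) X) + B (D (of E 0 p)) X + B (of E 0 p) (D X) = 0 := by
  suffices D ∘ₗ B (of E 0 p) + B (D (of E 0 p)) + B (of E 0 p) ∘ₗ D = 0 by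
    simpa using LinearMap.congr_fun this X
  refine linearMap_ext 𝕜 fun j => LinearMap.ext fun w => ?_
  simpa [lof_eq_of] using hD 0 j p w

variable {p : E 0}

theorem twisted_derivation (hdeg : HasDegreeOne B) (hsymm : IsGradedSymm B)
    (hJ : IsGradedJacobi B) (hD : IsDerivation D B) {i j : ℤ} (v : E i) (w : E j) :
    D (B (of E i v) (of E j w)) + B (of E 0 p) (B (of E i v) (of E j w)) +
        B (D (of E i v) + B (of E 0 p) (of E i v)) (of E j w) +
        ((-1 : 𝕜) ^ i) • B (of E i v) (D (of E j w) + B (of E 0 p) (of E j w)) = 0 := by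
  have hpw : B (B (of E 0 p) (of E j w)) (of E i v) =
      (-1 : 𝕜) ^ ((j + 1) * i) • B (of E i v) (B (of E 0 p) (of E j w)) := by
    rw [hdeg.eq_of p w, zero_add]
    exact hsymm _ _ _ v
  have hJac := hJ 0 i j p v w
  rw [zero_mul, zpow_zero, one_smul, hpw, smul_smul, neg_one_zpow_mul_mul_neg_one_zpow,
    ← hsymm.apply_of_zero_comm p] at hJac
  rw [map_add, LinearMap.add_apply, map_add, smul_add]
  linear_combination (norm := abel) hD i j v w + hJac

variable [CharZero 𝕜]

theorem apply_D_self_eq_zero (hsymm : IsGradedSymm B) (hD : IsDerivation D B)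
    (hp : B (of E 0 p) (of E 0 p) = 0) : B (of E 0 p) (D (of E 0 p)) = 0 := by
  have h := hD 0 0 p p
  rw [hp, map_zero, zero_add, zpow_zero, one_smul, ← hsymm.apply_of_zero_comm p (D _)] at h
  exact eq_zero_of_add_self_eq_zero (𝕜 := 𝕜) h

theorem apply_apply_self_eq_zero (hsymm : IsGradedSymm B) (hJ : IsGradedJacobi B)
    (hp : B (of E 0 p) (of E 0 p) = 0) (X : ⨁ i, E i) : B (of E 0 p) (B (of E 0 p) X) = 0 := by
  suffices B (of E 0 p) ∘ₗ B (of E 0 p) = 0 by simpa using LinearMap.congr_fun this X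
  refine linearMap_ext 𝕜 fun k => LinearMap.ext fun z => ?_
  have h := hJ 0 0 k p p z
  simp only [hp, map_zero, LinearMap.zero_apply, zero_add, zero_mul, zpow_zero, one_smul] at h
  simpa [lof_eq_of, hsymm.apply_of_zero_comm p] using eq_zero_of_add_self_eq_zero (𝕜 := 𝕜) h

theorem twisted_differential_sq (hDD : ∀ t, D (D t) = 0) (hsymm : IsGradedSymm B)
    (hJ : IsGradedJacobi B) (hD : IsDerivation D B) (hp : B (of E 0 p) (of E 0 p) = 0)
    (X : ⨁ i, E i) :
    B (D (of E 0 p)) X + (D (D X + B (of E 0 p) X) + B (of E 0 p) (D X + B (of E 0 p) X)) = 0 := by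
  rw [map_add, map_add, hDD, apply_apply_self_eq_zero hsymm hJ hp, zero_add, add_zero,
    ← hD.apply_of_zero_left p X]
  abel

end GradedBracket

/-- Let `(E, l₁, l₂)` be a symmetric DGLA (here `D` is the degree-1
differential `l₁` and `B` the degree-1 graded symmetric bracket `l₂`, both given on the total
space `⨁ i, E i`), and let `π ∈ E₀` be a Poisson element, i.e. `l₂(π,π) = 0`.  Then the
deformed structure `[π + S, l₁ + l₂]_RN = l₁(π) + (l₁ + l₂(π,·)) + l₂` is a curved symmetric
DGLA structure on `E` with curvature `C' = l₁(π) ∈ E₁`, differential `d' = l₁ + l₂(π,·)` and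
bracket `l₂`; explicitly:
(a) `l₂` is a graded symmetric Lie bracket of degree 1;
(b) `(l₁ + l₂(π,·))(l₁(π)) = 0`;
(c) `l₂(l₁(π),X) + (l₁ + l₂(π,·))²(X) = 0` for all `X ∈ E`;
(d) `l₁l₂(X,Y) + l₂(π,l₂(X,Y)) + l₂(l₁X + l₂(π,X),Y) + (-1)^{|X|} l₂(X,l₁Y + l₂(π,Y)) = 0`
for all homogeneous `X, Y ∈ E`. -/
theorem statement14 (𝕜 : Type) [Field 𝕜] [CharZero 𝕜]
    (E : ℤ → Type) [∀ i, AddCommGroup (E i)] [∀ i, Module 𝕜 (E i)]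
    (D : (⨁ i, E i) →ₗ[𝕜] ⨁ i, E i)
    (hDdeg : ∀ (i : ℤ) (v : E i) (m : ℤ), m ≠ i + 1 → D (DirectSum.of E i v) m = 0)
    (hDD : ∀ t : ⨁ i, E i, D (D t) = 0)
    (B : (⨁ i, E i) →ₗ[𝕜] (⨁ i, E i) →ₗ[𝕜] ⨁ i, E i)
    (hBdeg : ∀ (i j : ℤ) (v : E i) (w : E j) (m : ℤ), m ≠ i + j + 1 →
      B (DirectSum.of E i v) (DirectSum.of E j w) m = 0)
    (hBsym : ∀ (i j : ℤ) (v : E i) (w : E j),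
      B (DirectSum.of E i v) (DirectSum.of E j w) =
        ((-1 : 𝕜) ^ (i * j)) • B (DirectSum.of E j w) (DirectSum.of E i v))
    (hJac : ∀ (i j k : ℤ) (v : E i) (w : E j) (z : E k),
      B (B (DirectSum.of E i v) (DirectSum.of E j w)) (DirectSum.of E k z) +
          ((-1 : 𝕜) ^ (j * k)) •
            B (B (DirectSum.of E i v) (DirectSum.of E k z)) (DirectSum.of E j w) +
          ((-1 : 𝕜) ^ (i * (j + k))) •
            B (B (DirectSum.of E j w) (DirectSum.of E k z)) (DirectSum.of E i v) = 0)
    (hcompat : ∀ (i j : ℤ) (v : E i) (w : E j),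
      D (B (DirectSum.of E i v) (DirectSum.of E j w)) +
          B (D (DirectSum.of E i v)) (DirectSum.of E j w) +
          ((-1 : 𝕜) ^ i) • B (DirectSum.of E i v) (D (DirectSum.of E j w)) = 0)
    (π : E 0) (hπ : B (DirectSum.of E 0 π) (DirectSum.of E 0 π) = 0) :
    -- the curvature `C' = l₁(π)` lies in `E₁`
    ((∀ m : ℤ, m ≠ 1 → D (DirectSum.of E 0 π) m = 0) ∧
    -- (a) `l₂` is a graded symmetric Lie bracket of degree 1
      ((∀ (i j : ℤ) (v : E i) (w : E j),
          B (DirectSum.of E i v) (DirectSum.of E j w) =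
            ((-1 : 𝕜) ^ (i * j)) • B (DirectSum.of E j w) (DirectSum.of E i v)) ∧
        (∀ (i j k : ℤ) (v : E i) (w : E j) (z : E k),
          B (B (DirectSum.of E i v) (DirectSum.of E j w)) (DirectSum.of E k z) +
              ((-1 : 𝕜) ^ (j * k)) •
                B (B (DirectSum.of E i v) (DirectSum.of E k z)) (DirectSum.of E j w) +
              ((-1 : 𝕜) ^ (i * (j + k))) •
                B (B (DirectSum.of E j w) (DirectSum.of E k z)) (DirectSum.of E i v) = 0) ∧
        (∀ (i j : ℤ) (v : E i) (w : E j) (m : ℤ), m ≠ i + j + 1 →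
          B (DirectSum.of E i v) (DirectSum.of E j w) m = 0))) ∧
    -- (b) `(l₁ + l₂(π,·))(l₁(π)) = 0`
    (D (D (DirectSum.of E 0 π)) + B (DirectSum.of E 0 π) (D (DirectSum.of E 0 π)) = 0) ∧
    -- (c) `l₂(l₁(π),X) + (l₁ + l₂(π,·))²(X) = 0` for all `X ∈ E`
    (∀ X : ⨁ i, E i,
      B (D (DirectSum.of E 0 π)) X +
          (D (D X + B (DirectSum.of E 0 π) X) +
            B (DirectSum.of E 0 π) (D X + B (DirectSum.of E 0 π) X)) = 0) ∧
    -- (d) for all homogeneous `X ∈ E_i`, `Y ∈ E_j`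
    (∀ (i j : ℤ) (v : E i) (w : E j),
      D (B (DirectSum.of E i v) (DirectSum.of E j w)) +
          B (DirectSum.of E 0 π) (B (DirectSum.of E i v) (DirectSum.of E j w)) +
          B (D (DirectSum.of E i v) + B (DirectSum.of E 0 π) (DirectSum.of E i v))
            (DirectSum.of E j w) +
          ((-1 : 𝕜) ^ i) •
            B (DirectSum.of E i v)
              (D (DirectSum.of E j w) + B (DirectSum.of E 0 π) (DirectSum.of E j w)) = 0) := by
  refine ⟨⟨hDdeg 0 π, hBsym, hJac, hBdeg⟩, ?_, twisted_differential_sq hDD hBsym hJac hcompat hπ,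
    fun i j v w => twisted_derivation hBdeg hBsym hJac hcompat v w⟩
  rw [hDD, apply_D_self_eq_zero hBsym hcompat hπ, add_zero]

end RN
end

section
/- Let (E → M, ∘, ρ, ⟨·,·⟩) be a pre-Courant algebroid. Then X ∘ (fY) = f·(X ∘ Y) + (ρ(X)f)·Y for all sections X, Y ∈ Γ(E) and all smooth functions f ∈ C^∞(M). -/
open Bundle
open scoped Manifold

noncomputable section

/-! Pair `X ∘ (fY)` with an arbitrary section `Z`. The first axiom together with the Leibniz rule
`ρ(X)(f⟨Y,Z⟩) = f ρ(X)⟨Y,Z⟩ + ⟨Y,Z⟩ ρ(X)f` gives `⟨X ∘ (fY), Z⟩ = ⟨f (X ∘ Y) + (ρ(X)f) Y, Z⟩`.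
Since `ρ(X)f` is smooth, the right-hand side is a smooth section, and nondegeneracy of the pairing
on smooth sections identifies the two. -/

section Derivative

variable {𝕜 : Type*} [NontriviallyNormedField 𝕜]
  {E : Type*} [NormedAddCommGroup E] [NormedSpace 𝕜 E] {H : Type*} [TopologicalSpace H]
  {I : ModelWithCorners 𝕜 E H} {M : Type*} [TopologicalSpace M] [ChartedSpace H M]
  {E' : Type*} [NormedAddCommGroup E'] [NormedSpace 𝕜 E']

theorem ContMDiff.mfderiv_apply_vectorField [IsManifold I 1 M] {m n : WithTop ℕ∞}
    {f : M → E'} (hf : ContMDiff I 𝓘(𝕜, E') n f) (hmn : m + 1 ≤ n)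
    {v : ∀ x, TangentSpace I x}
    (hv : ContMDiff I I.tangent m (fun x => (⟨x, v x⟩ : TangentBundle I M))) :
    ContMDiff I 𝓘(𝕜, E') m (fun x => mfderiv I 𝓘(𝕜, E') f x (v x)) :=
  (contMDiff_snd_tangentBundle_modelSpace E' 𝓘(𝕜, E')).comp <|
    (hf.contMDiff_tangentMap hmn).comp hv

theorem mfderiv_mul_apply {p q : M → 𝕜} {x : M} (hp : MDifferentiableAt I 𝓘(𝕜, 𝕜) p x)
    (hq : MDifferentiableAt I 𝓘(𝕜, 𝕜) q x) (v : TangentSpace I x) :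
    (show 𝕜 from mfderiv I 𝓘(𝕜, 𝕜) (p * q) x v) =
      p x * (show 𝕜 from mfderiv I 𝓘(𝕜, 𝕜) q x v) +
        q x * (show 𝕜 from mfderiv I 𝓘(𝕜, 𝕜) p x v) := by
  rw [(hp.hasMFDerivAt.mul hq.hasMFDerivAt).mfderiv]
  rfl

end Derivative

section PreCourant

variable {EB : Type*} [NormedAddCommGroup EB] [NormedSpace ℝ EB]
  {HB : Type*} [TopologicalSpace HB] {IB : ModelWithCorners ℝ EB HB}
  {M : Type*} [TopologicalSpace M] [ChartedSpace HB M]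
  {F : Type*} [NormedAddCommGroup F] [NormedSpace ℝ F]
  {V : M → Type*} [TopologicalSpace (TotalSpace F V)] [∀ x, AddCommGroup (V x)]
  [∀ x, Module ℝ (V x)] [∀ x, TopologicalSpace (V x)] [FiberBundle F V]
  {n : WithTop ℕ∞}

theorem pairing_circ_smul_right (g : ∀ x, V x →ₗ[ℝ] V x →ₗ[ℝ] ℝ)
    (ρ : ∀ x, V x →ₗ[ℝ] TangentSpace IB x)
    (circ : Cₛ^n⟮IB; F, V⟯ → Cₛ^n⟮IB; F, V⟯ → Cₛ^n⟮IB; F, V⟯)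
    (hax1 : ∀ (X Y Z : Cₛ^n⟮IB; F, V⟯) (x : M),
      (mfderiv IB 𝓘(ℝ, ℝ) (fun y => g y (Y y) (Z y)) x (ρ x (X x)) : ℝ) =
        g x (circ X Y x) (Z x) + g x (Y x) (circ X Z x))
    {f : M → ℝ} {X Y fY Z : Cₛ^n⟮IB; F, V⟯} (hfY : ∀ x, fY x = f x • Y x) {x : M}
    (hf : MDifferentiableAt IB 𝓘(ℝ, ℝ) f x)
    (hYZ : MDifferentiableAt IB 𝓘(ℝ, ℝ) (fun y => g y (Y y) (Z y)) x) :
    g x (circ X fY x) (Z x) =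
      g x (f x • circ X Y x + (show ℝ from mfderiv IB 𝓘(ℝ, ℝ) f x (ρ x (X x))) • Y x) (Z x) := by
  have hfYZ : (fun y => g y (fY y) (Z y)) = f * fun y => g y (Y y) (Z y) := by
    ext y
    simp [hfY]
  have leibniz : f x * (g x (circ X Y x) (Z x) + g x (Y x) (circ X Z x)) +
      g x (Y x) (Z x) * (show ℝ from mfderiv IB 𝓘(ℝ, ℝ) f x (ρ x (X x))) =
      g x (circ X fY x) (Z x) + g x (fY x) (circ X Z x) := by
    rw [← hax1 X Y Z x, ← mfderiv_mul_apply hf hYZ, ← hfYZ]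
    exact hax1 X fY Z x
  rw [hfY x] at leibniz
  generalize (show ℝ from mfderiv IB 𝓘(ℝ, ℝ) f x (ρ x (X x))) = c at leibniz ⊢
  simp only [map_add, map_smul, LinearMap.add_apply, LinearMap.smul_apply, smul_eq_mul] at leibniz ⊢
  linear_combination -leibniz

end PreCourant

theorem statement19_general
    {EB : Type} [NormedAddCommGroup EB] [NormedSpace ℝ EB]
    {HB : Type} [TopologicalSpace HB] (IB : ModelWithCorners ℝ EB HB)
    (M : Type) [TopologicalSpace M] [ChartedSpace HB M] [IsManifold IB (⊤ : ℕ∞) M]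
    (F : Type) [NormedAddCommGroup F] [NormedSpace ℝ F]
    (V : M → Type) [TopologicalSpace (TotalSpace F V)] [∀ x, AddCommGroup (V x)]
    [∀ x, Module ℝ (V x)] [∀ x, TopologicalSpace (V x)]
    [FiberBundle F V] [VectorBundle ℝ F V] [ContMDiffVectorBundle (⊤ : ℕ∞) F V IB]
    -- the fiberwise inner product
    (g : ∀ x, V x →ₗ[ℝ] V x →ₗ[ℝ] ℝ)
    (hgsmooth : ∀ Y Z : ContMDiffSection IB F (⊤ : ℕ∞) V,
      ContMDiff IB 𝓘(ℝ, ℝ) (⊤ : ℕ∞) (fun x => g x (Y x) (Z x)))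
    -- nondegeneracy, at the level of sections
    (hgnondeg : ∀ W : ContMDiffSection IB F (⊤ : ℕ∞) V,
      (∀ Z : ContMDiffSection IB F (⊤ : ℕ∞) V, (fun x => g x (W x) (Z x)) = fun _ => (0 : ℝ)) →
        W = 0)
    -- the anchor, a smooth bundle map to the tangent bundle
    (ρ : ∀ x, V x →ₗ[ℝ] TangentSpace IB x)
    (hρ : ContMDiff (IB.prod 𝓘(ℝ, F)) IB.tangent (⊤ : ℕ∞)
      (fun p : TotalSpace F V => TotalSpace.mk' EB p.proj (ρ p.proj p.snd)))
    -- the bilinear operation on sections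
    (circ : ContMDiffSection IB F (⊤ : ℕ∞) V → ContMDiffSection IB F (⊤ : ℕ∞) V → ContMDiffSection IB F (⊤ : ℕ∞) V)
    -- `ρ(X)⟨Y,Z⟩ = ⟨X∘Y,Z⟩ + ⟨Y,X∘Z⟩`
    (hax1 : ∀ (X Y Z : ContMDiffSection IB F (⊤ : ℕ∞) V) (x : M),
      (mfderiv IB 𝓘(ℝ, ℝ) (fun y => g y (Y y) (Z y)) x (ρ x (X x)) : ℝ) =
        g x (circ X Y x) (Z x) + g x (Y x) (circ X Z x))
    -- a smooth function `f` and sections `X, Y`; `fY` is the section `f • Y`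
    (f : M → ℝ) (hf : ContMDiff IB 𝓘(ℝ, ℝ) (⊤ : ℕ∞) f)
    (X Y fY : ContMDiffSection IB F (⊤ : ℕ∞) V) (hfY : ∀ x, fY x = f x • Y x) :
    ∀ x : M, circ X fY x = f x • circ X Y x + (show ℝ from mfderiv IB 𝓘(ℝ, ℝ) f x (ρ x (X x))) • Y x := by
  let D : M → ℝ := fun x => mfderiv IB 𝓘(ℝ, ℝ) f x (ρ x (X x))
  have hD : ContMDiff IB 𝓘(ℝ, ℝ) (⊤ : ℕ∞) D :=
    hf.mfderiv_apply_vectorField le_rfl (hρ.comp X.contMDiff)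
  let rhs : ContMDiffSection IB F (⊤ : ℕ∞) V :=
    ⟨f • ⇑(circ X Y), hf.smul_section (circ X Y).contMDiff⟩ + ⟨D • ⇑Y, hD.smul_section Y.contMDiff⟩
  have h : circ X fY = rhs := sub_eq_zero.mp <| hgnondeg _ fun Z => funext fun y => by
    rw [ContMDiffSection.coe_sub, Pi.sub_apply, map_sub, LinearMap.sub_apply, sub_eq_zero]
    exact pairing_circ_smul_right g ρ circ hax1 hfY (hf.mdifferentiableAt (by simp))
      ((hgsmooth Y Z).mdifferentiableAt (by simp))
  exact fun x => congr($h x)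

/-- Let `(E → M, ∘, ρ, ⟨·,·⟩)` be a pre-Courant algebroid: a smooth vector
bundle `V` over a smooth manifold `M` with a fiberwise nondegenerate symmetric bilinear form
`g`, a (smooth) anchor `ρ : E → TM`, and an `ℝ`-bilinear operation `∘` on smooth sections
satisfying `ρ(X)⟨Y,Z⟩ = ⟨X∘Y,Z⟩ + ⟨Y,X∘Z⟩` and `ρ(X)⟨Y,Z⟩ = ⟨X,Y∘Z⟩ + ⟨X,Z∘Y⟩`.
Then `X ∘ (fY) = f·(X∘Y) + (ρ(X)f)·Y` for all sections `X, Y` and smooth functions `f`. -/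
theorem statement19
    {EB : Type} [NormedAddCommGroup EB] [NormedSpace ℝ EB]
    {HB : Type} [TopologicalSpace HB] (IB : ModelWithCorners ℝ EB HB)
    (M : Type) [TopologicalSpace M] [ChartedSpace HB M] [IsManifold IB (⊤ : ℕ∞) M]
    (F : Type) [NormedAddCommGroup F] [NormedSpace ℝ F]
    (V : M → Type) [TopologicalSpace (TotalSpace F V)] [∀ x, AddCommGroup (V x)]
    [∀ x, Module ℝ (V x)] [∀ x, TopologicalSpace (V x)]
    [FiberBundle F V] [VectorBundle ℝ F V] [ContMDiffVectorBundle (⊤ : ℕ∞) F V IB]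
    -- the fiberwise inner product
    (g : ∀ x, V x →ₗ[ℝ] V x →ₗ[ℝ] ℝ)
    (hgsymm : ∀ (x : M) (v w : V x), g x v w = g x w v)
    (hgsmooth : ∀ Y Z : ContMDiffSection IB F (⊤ : ℕ∞) V,
      ContMDiff IB 𝓘(ℝ, ℝ) (⊤ : ℕ∞) (fun x => g x (Y x) (Z x)))
    -- nondegeneracy, at the level of sections
    (hgnondeg : ∀ W : ContMDiffSection IB F (⊤ : ℕ∞) V,
      (∀ Z : ContMDiffSection IB F (⊤ : ℕ∞) V, (fun x => g x (W x) (Z x)) = fun _ => (0 : ℝ)) →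
        W = 0)
    -- the anchor, a smooth bundle map to the tangent bundle
    (ρ : ∀ x, V x →ₗ[ℝ] TangentSpace IB x)
    (hρ : ContMDiff (IB.prod 𝓘(ℝ, F)) IB.tangent (⊤ : ℕ∞)
      (fun p : TotalSpace F V => TotalSpace.mk' EB p.proj (ρ p.proj p.snd)))
    -- the bilinear operation on sections
    (circ : ContMDiffSection IB F (⊤ : ℕ∞) V → ContMDiffSection IB F (⊤ : ℕ∞) V → ContMDiffSection IB F (⊤ : ℕ∞) V)
    (hbilin : ∀ (c : ℝ) (X X' Y Y' : ContMDiffSection IB F (⊤ : ℕ∞) V),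
      circ (X + X') Y = circ X Y + circ X' Y ∧ circ X (Y + Y') = circ X Y + circ X Y' ∧
        circ (c • X) Y = c • circ X Y ∧ circ X (c • Y) = c • circ X Y)
    -- `ρ(X)⟨Y,Z⟩ = ⟨X∘Y,Z⟩ + ⟨Y,X∘Z⟩`
    (hax1 : ∀ (X Y Z : ContMDiffSection IB F (⊤ : ℕ∞) V) (x : M),
      (mfderiv IB 𝓘(ℝ, ℝ) (fun y => g y (Y y) (Z y)) x (ρ x (X x)) : ℝ) =
        g x (circ X Y x) (Z x) + g x (Y x) (circ X Z x))
    -- `ρ(X)⟨Y,Z⟩ = ⟨X,Y∘Z⟩ + ⟨X,Z∘Y⟩`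
    (hax2 : ∀ (X Y Z : ContMDiffSection IB F (⊤ : ℕ∞) V) (x : M),
      (mfderiv IB 𝓘(ℝ, ℝ) (fun y => g y (Y y) (Z y)) x (ρ x (X x)) : ℝ) =
        g x (X x) (circ Y Z x) + g x (X x) (circ Z Y x))
    -- a smooth function `f` and sections `X, Y`; `fY` is the section `f • Y`
    (f : M → ℝ) (hf : ContMDiff IB 𝓘(ℝ, ℝ) (⊤ : ℕ∞) f)
    (X Y fY : ContMDiffSection IB F (⊤ : ℕ∞) V) (hfY : ∀ x, fY x = f x • Y x) :
    ∀ x : M, circ X fY x = f x • circ X Y x + (show ℝ from mfderiv IB 𝓘(ℝ, ℝ) f x (ρ x (X x))) • Y x :=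
  statement19_general IB M F V g hgsmooth hgnondeg ρ hρ circ hax1 f hf X Y fY hfY
end
end
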